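/- arXiv:2411.14238 — 2 statements merged into one kernel-verified Lean document; each statement's English description precedes it below -/
import Mathlib

section
/- Let G be a finite simple bipartite graph on n vertices and, for each nonnegative even integer i, let f_i = b_i − (−1)^{i/2} a_i, where a_i and b_i are the coefficients of x^{n−i} in φ(G,x) = det(xI − A(G)) and π(G,x) = per(xI − A(G)), respectively. If f_i = 0 for every even i, then G is C_{4k}-free, i.e., G contains no cycle whose length is divisible by 4. -/
open Polynomial SimpleGraph
open scoped Classical

noncomputable section

/-- The adjacency matrix of a simple graph `G`, with entries in `R`. -/
def adjMat (R : Type*) [Zero R] [One R] {V : Type*} [Fintype V] (G : SimpleGraph V) :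
    Matrix V V R := fun u v => if G.Adj u v then 1 else 0

/-- The characteristic polynomial `det (xI - A(G))` of a simple graph `G`. -/
def charPolyG (R : Type*) [CommRing R] {V : Type*} [Fintype V] (G : SimpleGraph V) : R[X] :=
  (adjMat R G).charpoly

/-- The permanental polynomial `per (xI - A(G))` of a simple graph `G`. -/
def permPolyG (R : Type*) [CommRing R] {V : Type*} [Fintype V] (G : SimpleGraph V) : R[X] :=
  (Matrix.charmatrix (adjMat R G)).permanent

/-- The modified characteristic polynomial `φ_p(G,x) = ∑_{i even} (-1)^{i/2} a_i x^{n-i}`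
of a (bipartite) graph `G` on `n` vertices, where `a_i` is the coefficient of `x^{n-i}`
in the characteristic polynomial. -/
def phiP {V : Type*} [Fintype V] (G : SimpleGraph V) : ℝ[X] :=
  ∑ i ∈ Finset.range (Fintype.card V + 1),
    if Even i then
      C ((-1 : ℝ) ^ (i / 2) * (charPolyG ℝ G).coeff (Fintype.card V - i)) *
        X ^ (Fintype.card V - i)
    else 0

/-- `G` contains no cycle whose length is divisible by 4. -/
def C4kFree {V : Type*} (G : SimpleGraph V) : Prop :=
  ¬ ∃ (v : V) (c : G.Walk v v), c.IsCycle ∧ 4 ∣ c.length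

/-- `G` is `4k`-intercyclic: it contains no two vertex-disjoint cycles,
each of length divisible by 4. -/
def Intercyclic4k {V : Type*} (G : SimpleGraph V) : Prop :=
  ¬ ∃ (u v : V) (c : G.Walk u u) (d : G.Walk v v),
      c.IsCycle ∧ d.IsCycle ∧ 4 ∣ c.length ∧ 4 ∣ d.length ∧
      ∀ x, x ∈ c.support → x ∉ d.support

/-- A subgraph `R` of `G` is a cycle of `G` if it is the subgraph traced by some cycle walk. -/
def IsCycleSubgraph {V : Type*} (G : SimpleGraph V) (R : G.Subgraph) : Prop :=
  ∃ (v : V) (c : G.Walk v v), c.IsCycle ∧ R = c.toSubgraph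

/-- The set of all `4k`-cycles (cycles of length divisible by 4) of `G`,
viewed as subgraphs. -/
def cycles4k {V : Type*} (G : SimpleGraph V) : Set G.Subgraph :=
  {R | ∃ (v : V) (c : G.Walk v v), c.IsCycle ∧ 4 ∣ c.length ∧ R = c.toSubgraph}

/-- The connected component `c` of the subgraph `H` is a single edge (a `K₂`). -/
def IsEdgeComp {V : Type*} {G : SimpleGraph V} (H : G.Subgraph)
    (c : H.coe.ConnectedComponent) : Prop :=
  ∃ x y : H.verts, H.coe.Adj x y ∧ c.supp = {x, y}

/-- The connected component `c` of the subgraph `H` is a cycle: there is a cycle walk whose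
support is exactly `c` and which uses every edge of `H` inside `c`. -/
def IsCycleComp {V : Type*} {G : SimpleGraph V} (H : G.Subgraph)
    (c : H.coe.ConnectedComponent) : Prop :=
  ∃ (v : H.verts) (w : H.coe.Walk v v), w.IsCycle ∧
    {x | x ∈ w.support} = c.supp ∧
    ∀ x y : H.verts, H.coe.Adj x y → x ∈ c.supp → w.toSubgraph.Adj x y

/-- A Sachs subgraph of `G`: a subgraph each of whose connected components is either
a single edge or a cycle. -/
def IsSachs {V : Type*} {G : SimpleGraph V} (H : G.Subgraph) : Prop :=
  ∀ c : H.coe.ConnectedComponent, IsEdgeComp H c ∨ IsCycleComp H c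

/-- The number of connected components of the subgraph `H`. -/
def pCount {V : Type*} {G : SimpleGraph V} (H : G.Subgraph) : ℕ :=
  Nat.card H.coe.ConnectedComponent

/-- The number of components of `H` that are cycles of length divisible by 4. -/
def sCount {V : Type*} {G : SimpleGraph V} (H : G.Subgraph) : ℕ :=
  Set.ncard {c : H.coe.ConnectedComponent | IsCycleComp H c ∧ c.supp.ncard % 4 = 0}

/-- The number of components of `H` that are cycles of length congruent to 2 mod 4. -/
def tCount {V : Type*} {G : SimpleGraph V} (H : G.Subgraph) : ℕ :=
  Set.ncard {c : H.coe.ConnectedComponent | IsCycleComp H c ∧ c.supp.ncard % 4 = 2}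

/-- The number of components of `H` that are cycles. -/
def cycCount {V : Type*} {G : SimpleGraph V} (H : G.Subgraph) : ℕ :=
  Set.ncard {c : H.coe.ConnectedComponent | IsCycleComp H c}

/-- `R` is a union of connected components of `H`. -/
def IsComponentUnion {V : Type*} {G : SimpleGraph V} (R H : G.Subgraph) : Prop :=
  R ≤ H ∧ ∀ x y, H.Adj x y → x ∈ R.verts → R.Adj x y

/-!
For `i = 4k` the sign `(-1)^(i/2)` is `1`, so `f_i` is the coefficient of `x^(n-i)` in
`per (xI - A) - det (xI - A)`, namely the sum over permutations `σ` moving exactly `i` vertices of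
`(1 - sgn σ) ∏ A (σ v) v`: every term is nonnegative. A cycle of length `4k` in `G`, read as a
cyclic permutation of its vertices, is an odd permutation and contributes `2`, so `f_{4k} > 0`.
-/

open Equiv Finset

theorem List.rel_formPerm_of_isChain_cons {α : Type*} [DecidableEq α] {r : α → α → Prop}
    {a : α} {l : List α} (hl : l.Nodup) (hchain : (a :: l).IsChain r)
    (hlast : l.getLast? = some a) {x : α} (hx : x ∈ l) : r x (l.formPerm x) := by
  obtain ⟨i, hi, rfl⟩ := List.getElem_of_mem hx
  rw [List.formPerm_apply_getElem _ hl]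
  rw [List.isChain_iff_getElem] at hchain
  rcases Nat.lt_or_ge (i + 1) l.length with h | h
  · have := hchain (i + 1) (by simp; omega)
    rw [List.getElem_cons_succ, List.getElem_cons_succ] at this
    simpa only [Nat.mod_eq_of_lt h] using this
  · obtain rfl : i = l.length - 1 := by omega
    rw [List.getLast?_eq_getElem?, List.getElem?_eq_getElem (by omega), Option.some_inj] at hlast
    simpa [hlast, Nat.sub_add_cancel (by omega : 1 ≤ l.length)] using hchain 0 (by simp; omega)

namespace SimpleGraph.Walk
variable {V : Type*} {G : SimpleGraph V} {u : V} {c : G.Walk u u}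

theorem getLast?_support_tail_of_ne_nil (hc : c ≠ nil) : c.support.tail.getLast? = some u := by
  cases c with
  | nil => exact absurd rfl hc
  | cons _ p => simp [List.getLast?_eq_some_getLast, p.getLast_support]

theorem IsCycle.adj_formPerm_support_tail [DecidableEq V] (hc : c.IsCycle) {x : V}
    (hx : x ∈ c.support.tail) : G.Adj x (c.support.tail.formPerm x) :=
  List.rel_formPerm_of_isChain_cons (a := u) hc.support_nodup
    (c.cons_tail_support ▸ c.isChain_adj_support) (getLast?_support_tail_of_ne_nil hc.ne_nil) hx

theorem IsCycle.exists_isCycle_perm [Fintype V] [DecidableEq V] (hc : c.IsCycle) :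
    ∃ σ : Perm V, σ.IsCycle ∧ #σ.support = c.length ∧ ∀ x ∈ σ.support, G.Adj x (σ x) := by
  have hnodup := hc.support_nodup
  have hlen : c.support.tail.length = c.length := by simp [c.length_support]
  have hlen3 := hc.three_le_length
  refine ⟨c.support.tail.formPerm, List.isCycle_formPerm hnodup (by omega), ?_, ?_⟩
  all_goals rw [List.support_formPerm_of_nodup _ hnodup fun x h => by simp [h] at hlen; omega]
  · rw [List.card_toFinset, hnodup.dedup, hlen]
  · exact fun x hx => hc.adj_formPerm_support_tail (List.mem_toFinset.mp hx)

end SimpleGraph.Walk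

namespace Matrix
variable {n : Type*} [Fintype n] [DecidableEq n]

theorem prod_charmatrix_apply_of_diag_eq_zero {R : Type*} [CommRing R] {M : Matrix n n R}
    (hM : ∀ i, M i i = 0) (σ : Perm n) :
    ∏ i, charmatrix M (σ i) i =
      C (∏ i ∈ σ.support, -M (σ i) i) * X ^ (Fintype.card n - #σ.support) := by
  rw [← prod_mul_prod_compl σ.support, map_prod, ← card_compl, ← prod_const]
  congr 1
  · refine prod_congr rfl fun i hi => ?_
    rw [charmatrix_apply_ne _ _ _ (Perm.mem_support.mp hi), map_neg]
  · refine prod_congr rfl fun i hi => ?_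
    rw [Perm.notMem_support.mp (mem_compl.mp hi), charmatrix_apply_eq, hM, map_zero, sub_zero]

theorem permanent_charmatrix_coeff_sub_charpoly_coeff {R : Type*} [CommRing R] {M : Matrix n n R}
    (hM : ∀ i, M i i = 0) {ℓ : ℕ} (hℓ : ℓ ≤ Fintype.card n) :
    (charmatrix M).permanent.coeff (Fintype.card n - ℓ) - M.charpoly.coeff (Fintype.card n - ℓ) =
      ∑ σ : Perm n with #σ.support = ℓ, (1 - (Perm.sign σ : R)) * ∏ i ∈ σ.support, -M (σ i) i := by
  rw [permanent, charpoly, det_apply, finsetSum_coeff, finsetSum_coeff, ← sum_sub_distrib,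
    sum_filter]
  refine sum_congr rfl fun σ _ => ?_
  have hσ : #σ.support ≤ Fintype.card n := card_le_univ _
  rw [prod_charmatrix_apply_of_diag_eq_zero hM, coeff_smul, coeff_C_mul, coeff_X_pow]
  by_cases h : #σ.support = ℓ
  · simp only [h, if_true, Units.smul_def, zsmul_eq_mul]
    ring
  · simp [h, show Fintype.card n - ℓ ≠ Fintype.card n - #σ.support by omega]

theorem le_permanent_charmatrix_coeff_sub_charpoly_coeff {R : Type*} [CommRing R]
    [PartialOrder R] [IsOrderedRing R] {M : Matrix n n R}
    (hM : ∀ i, M i i = 0) (hM₀ : ∀ i j, 0 ≤ M i j) {σ : Perm n} (hσ : Even #σ.support) :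
    (1 - (Perm.sign σ : R)) * ∏ i ∈ σ.support, M (σ i) i ≤
      (charmatrix M).permanent.coeff (Fintype.card n - #σ.support) -
        M.charpoly.coeff (Fintype.card n - #σ.support) := by
  have hsign (τ : Perm n) : 0 ≤ 1 - (Perm.sign τ : R) := by
    rcases Int.units_eq_one_or (Perm.sign τ) with hs | hs <;> norm_num [hs]
  have hprod (τ : Perm n) (hτ : #τ.support = #σ.support) :
      ∏ i ∈ τ.support, -M (τ i) i = ∏ i ∈ τ.support, M (τ i) i := by
    rw [prod_neg, hτ, hσ.neg_one_pow, one_mul]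
  rw [permanent_charmatrix_coeff_sub_charpoly_coeff hM (card_le_univ _), ← hprod σ rfl]
  refine single_le_sum (f := fun τ => (1 - (Perm.sign τ : R)) * ∏ i ∈ τ.support, -M (τ i) i)
    (fun τ hτ => ?_) (mem_filter.mpr ⟨mem_univ σ, rfl⟩)
  rw [hprod τ (mem_filter.mp hτ).2]
  exact mul_nonneg (hsign τ) (prod_nonneg fun i _ => hM₀ _ _)

end Matrix

theorem adjMat_apply_self (R : Type*) [Zero R] [One R] {V : Type*} [Fintype V]
    (G : SimpleGraph V) (v : V) : adjMat R G v v = 0 :=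
  if_neg (G.loopless.irrefl v)

theorem adjMat_nonneg (R : Type*) [Zero R] [One R] [Preorder R] [ZeroLEOneClass R] {V : Type*}
    [Fintype V] (G : SimpleGraph V) (u v : V) : 0 ≤ adjMat R G u v := by
  unfold adjMat; split_ifs
  exacts [zero_le_one, le_rfl]

theorem stmt_15_general {V : Type*} [Fintype V] (G : SimpleGraph V)
    (hf : ∀ i ≤ Fintype.card V, Even i →
      (permPolyG ℝ G).coeff (Fintype.card V - i)
        - (-1 : ℝ) ^ (i / 2) * (charPolyG ℝ G).coeff (Fintype.card V - i) = 0) :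
    C4kFree G := by
  rintro ⟨v, c, hc, k, hk⟩
  obtain ⟨σ, hσ, hcard, hadj⟩ := hc.exists_isCycle_perm
  have heven : Even #σ.support := ⟨2 * k, by omega⟩
  have hsign : Perm.sign σ = -1 := by rw [hσ.sign, heven.neg_one_pow]
  have hprod : ∏ i ∈ σ.support, adjMat ℝ G (σ i) i = 1 :=
    prod_eq_one fun i hi => if_pos (hadj i hi).symm
  have hf_cycle := hf #σ.support (card_le_univ _) heven
  rw [show #σ.support / 2 = 2 * k by omega, pow_mul, neg_one_sq, one_pow, one_mul] at hf_cycle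
  have hterm : (2 : ℝ) ≤ (permPolyG ℝ G).coeff (Fintype.card V - #σ.support) -
      (charPolyG ℝ G).coeff (Fintype.card V - #σ.support) := by
    have := Matrix.le_permanent_charmatrix_coeff_sub_charpoly_coeff
      (adjMat_apply_self ℝ G) (adjMat_nonneg ℝ G) heven
    rw [hsign, hprod] at this
    norm_num at this
    exact this
  linarith

/-- For a bipartite graph `G` on `n` vertices, if
`f_i = b_i - (-1)^{i/2} a_i = 0` for every even `i`, then `G` contains no cycle of length
divisible by 4. -/
theorem stmt_15 {V : Type*} [Fintype V] (G : SimpleGraph V) (hbip : G.Colorable 2)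
    (hf : ∀ i ≤ Fintype.card V, Even i →
      (permPolyG ℝ G).coeff (Fintype.card V - i)
        - (-1 : ℝ) ^ (i / 2) * (charPolyG ℝ G).coeff (Fintype.card V - i) = 0) :
    C4kFree G :=
  stmt_15_general G hf

end
end

section
/- Let G be a finite simple bipartite graph on n vertices that is C_{4k}-free (contains no cycle whose length is divisible by 4). Then for every nonnegative even integer i, the coefficients of x^{n−i} in the characteristic polynomial φ(G,x) = det(xI − A(G)) and in the permanental polynomial π(G,x) = per(xI − A(G)) satisfy b_i = (−1)^{i/2} a_i. -/
open Polynomial SimpleGraph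
open scoped Classical

noncomputable section

/-!
Expanding `per (xI - A)` and `det (xI - A)` over permutations, the coefficient of `x^{n-i}`
collects, for each permutation `σ` moving exactly `i` vertices, the product of
`-A (σ v) v` over the moved vertices; this is nonzero only when every moved vertex is adjacent
to its image. Then each cycle of `σ` of length at least 3 traces a cycle of `G`, which is even
because `G` is bipartite and not of length `0 mod 4` because `G` is `C_{4k}`-free. So all cycles
of `σ` have length `2 mod 4`, which forces `sign σ = (-1)^{i/2}`, and the two expansions agree
term by term up to that factor.
-/

open scoped Finset

namespace Matrix

variable {n R : Type*} [Fintype n] [DecidableEq n] [CommRing R] {M : Matrix n n R}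

theorem prod_charmatrix_perm (hM : ∀ i, M i i = 0) (σ : Equiv.Perm n) :
    ∏ i, charmatrix M (σ i) i =
      C (∏ i ∈ σ.support, -M (σ i) i) * X ^ (Fintype.card n - #σ.support) := by
  rw [← Finset.prod_mul_prod_compl σ.support, ← Finset.card_compl]
  congr 1
  · rw [map_prod]
    refine Finset.prod_congr rfl fun i hi => ?_
    rw [charmatrix_apply_ne _ _ _ (Equiv.Perm.mem_support.mp hi), map_neg]
  · refine Finset.prod_eq_pow_card fun i hi => ?_
    rw [Finset.mem_compl, Equiv.Perm.notMem_support] at hi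
    rw [hi, charmatrix_apply_eq, hM, map_zero, sub_zero]

theorem coeff_prod_charmatrix_perm (hM : ∀ i, M i i = 0) (σ : Equiv.Perm n) {k : ℕ}
    (hk : k ≤ Fintype.card n) :
    (∏ i, charmatrix M (σ i) i).coeff (Fintype.card n - k) =
      if #σ.support = k then ∏ i ∈ σ.support, -M (σ i) i else 0 := by
  have hσ : #σ.support ≤ Fintype.card n := Finset.card_le_univ _
  rw [prod_charmatrix_perm hM, coeff_C_mul, coeff_X_pow]
  by_cases h : #σ.support = k
  · simp [h]
  · simp [h, show Fintype.card n - k ≠ Fintype.card n - #σ.support by omega]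

theorem coeff_permanent_charmatrix (hM : ∀ i, M i i = 0) {k : ℕ} (hk : k ≤ Fintype.card n) :
    (charmatrix M).permanent.coeff (Fintype.card n - k) =
      ∑ σ : Equiv.Perm n, if #σ.support = k then ∏ i ∈ σ.support, -M (σ i) i else 0 := by
  rw [permanent, finsetSum_coeff]
  exact Finset.sum_congr rfl fun σ _ => coeff_prod_charmatrix_perm hM σ hk

theorem coeff_charpoly_of_diag_eq_zero (hM : ∀ i, M i i = 0) {k : ℕ}
    (hk : k ≤ Fintype.card n) :
    M.charpoly.coeff (Fintype.card n - k) =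
      ∑ σ : Equiv.Perm n, ((Equiv.Perm.sign σ : ℤ) : R) *
        if #σ.support = k then ∏ i ∈ σ.support, -M (σ i) i else 0 := by
  rw [charpoly, det_apply', finsetSum_coeff]
  refine Finset.sum_congr rfl fun σ _ => ?_
  rw [← C_eq_intCast, coeff_C_mul, coeff_prod_charmatrix_perm hM σ hk]

end Matrix

theorem Equiv.Perm.sign_eq_neg_one_pow_of_forall_mem_cycleType_mod_four
    {α : Type*} [Fintype α] [DecidableEq α] {σ : Equiv.Perm α}
    (h : ∀ m ∈ σ.cycleType, m % 4 = 2) : sign σ = (-1) ^ (#σ.support / 2) := by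
  have hsum : σ.cycleType.sum % 4 = 2 * Multiset.card σ.cycleType % 4 := by
    rw [Multiset.sum_nat_mod, Multiset.map_congr rfl h, Multiset.map_const',
      Multiset.sum_replicate, smul_eq_mul, mul_comm]
  rw [sign_of_cycleType, Int.units_pow_eq_pow_mod_two, ← sum_cycleType,
    Int.units_pow_eq_pow_mod_two (-1) (_ / 2)]
  congr 1
  omega

namespace SimpleGraph

variable {V : Type*} {G : SimpleGraph V}

theorem cycleGraph_isContained_of_isCycleOn {σ : Equiv.Perm V} {s : Finset V} {a : V}
    (hσ : σ.IsCycleOn s) (ha : a ∈ s) (hadj : ∀ v ∈ s, G.Adj v (σ v)) :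
    cycleGraph #s ⊑ G := by
  have hstep (k : ℕ) : G.Adj ((σ ^ k) a) ((σ ^ (k + 1)) a) := by
    rw [pow_succ', Equiv.Perm.mul_apply]
    exact hadj _ (hσ.1.mapsTo.perm_pow k ha)
  have hsucc {i j : Fin #s} (h : (i - j).val = 1) : (σ ^ (i : ℕ)) a = (σ ^ ((j : ℕ) + 1)) a := by
    have hi : (i : ℕ) = (1 + j) % #s := by
      have : NeZero #s := ⟨i.pos.ne'⟩
      conv_lhs => rw [← sub_add_cancel i j]
      rw [Fin.val_add, h]
    rw [hσ.pow_apply_eq_pow_apply ha, hi, add_comm]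
    exact Nat.mod_modEq _ _
  refine ⟨⟨⟨fun i => (σ ^ (i : ℕ)) a, fun {i j} hij => ?_⟩, fun i j hij => ?_⟩⟩
  · rcases cycleGraph_adj'.mp hij with h | h
    · rw [hsucc h]
      exact (hstep j).symm
    · rw [hsucc h]
      exact hstep i
  · have hmod := (hσ.pow_apply_eq_pow_apply ha).mp hij
    rwa [Nat.ModEq, Nat.mod_eq_of_lt i.isLt, Nat.mod_eq_of_lt j.isLt, ← Fin.ext_iff] at hmod

theorem card_mod_four_eq_two_of_isCycleOn (hbip : G.Colorable 2) (hfree : C4kFree G)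
    {σ : Equiv.Perm V} {s : Finset V} (hσ : σ.IsCycleOn s) (hs : 2 ≤ #s)
    (hadj : ∀ v ∈ s, G.Adj v (σ v)) : #s % 4 = 2 := by
  obtain ⟨a, ha⟩ : s.Nonempty := Finset.card_pos.mp (by omega)
  rcases hs.eq_or_lt with h2 | h3
  · omega
  obtain ⟨v, p, hp, hlen⟩ :=
    (cycleGraph_isContained_iff h3).mp (cycleGraph_isContained_of_isCycleOn hσ ha hadj)
  obtain ⟨k, hk⟩ := two_colorable_iff_forall_loop_even.mp hbip v p
  have h4 : ¬ 4 ∣ p.length := fun h4 => hfree ⟨v, p, hp, h4⟩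
  omega

theorem cycleType_mod_four_eq_two [Fintype V] [DecidableEq V] (hbip : G.Colorable 2)
    (hfree : C4kFree G) {σ : Equiv.Perm V} (hadj : ∀ v ∈ σ.support, G.Adj (σ v) v) :
    ∀ m ∈ σ.cycleType, m % 4 = 2 := by
  intro m hm
  rw [Equiv.Perm.cycleType_def, Multiset.mem_map] at hm
  obtain ⟨c, hc, rfl⟩ := hm
  exact card_mod_four_eq_two_of_isCycleOn hbip hfree
    (Equiv.Perm.isCycleOn_support_of_mem_cycleFactorsFinset hc)
    (Equiv.Perm.mem_cycleFactorsFinset_iff.mp hc).1.two_le_card_support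
    fun v hv => (hadj v (Equiv.Perm.mem_cycleFactorsFinset_support_le hc hv)).symm

variable [Fintype V] {R : Type*} [CommRing R]

theorem adjMat_self (v : V) : adjMat R G v v = 0 := by
  simp [adjMat]

theorem forall_adj_of_prod_adjMat_ne_zero [DecidableEq V] {σ : Equiv.Perm V}
    (h : ∏ v ∈ σ.support, -adjMat R G (σ v) v ≠ 0) : ∀ v ∈ σ.support, G.Adj (σ v) v :=
  fun v hv => by_contra fun hnadj => h (Finset.prod_eq_zero hv (by simp [adjMat, hnadj]))

end SimpleGraph

/-- For a `C_{4k}`-free bipartite graph `G` on `n` vertices, the coefficients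
of `x^{n-i}` in the characteristic and permanental polynomials satisfy
`b_i = (-1)^{i/2} a_i` for every nonnegative even `i`. -/
theorem stmt_16 {V : Type*} [Fintype V] (G : SimpleGraph V) (hbip : G.Colorable 2)
    (hfree : C4kFree G) :
    ∀ i ≤ Fintype.card V, Even i →
      (permPolyG ℝ G).coeff (Fintype.card V - i)
        = (-1 : ℝ) ^ (i / 2) * (charPolyG ℝ G).coeff (Fintype.card V - i) := by
  intro i hi _
  rw [permPolyG, charPolyG, Matrix.coeff_permanent_charmatrix adjMat_self hi,
    Matrix.coeff_charpoly_of_diag_eq_zero adjMat_self hi, Finset.mul_sum]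
  refine Finset.sum_congr rfl fun σ _ => ?_
  split_ifs with hcard
  · rcases eq_or_ne (∏ v ∈ σ.support, -adjMat ℝ G (σ v) v) 0 with h0 | h0
    · simp [h0]
    have hcycles := cycleType_mod_four_eq_two hbip hfree (forall_adj_of_prod_adjMat_ne_zero h0)
    rw [Equiv.Perm.sign_eq_neg_one_pow_of_forall_mem_cycleType_mod_four hcycles, hcard]
    push_cast
    rw [← mul_assoc, ← mul_pow]
    norm_num
  · simp

end
end
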